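/- Let R be a nonassociative ring with an additive surjection σ and an additive map δ satisfying σ(1)=1 and δ(1)=0. Then the flipped generalized polynomial ring R[X;σ,δ]^fl satisfies the left Euclidean division algorithm. -/

import Mathlib

open Finset
open scoped Classical

section Defs

variable {R : Type*} {S : Type*}

/-- Iterated power: `pw x 0 = 1`, `pw x (n+1) = pw x n * x`. -/
def pw [One S] [Mul S] (x : S) : ℕ → S
  | 0 => 1
  | n + 1 => pw x n * x

/-- `x` is power-associative. -/
def PowAssoc [One S] [Mul S] (x : S) : Prop := ∀ m n : ℕ, pw x m * pw x n = pw x (m + n)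

variable [NonAssocRing R] [NonAssocRing S]

/-- Interpret a finitely supported coefficient family as a left polynomial `Σ f(cᵢ)·xⁱ`. -/
noncomputable def lpoly (f : R →+* S) (x : S) (c : ℕ →₀ R) : S :=
  c.sum fun i r => f r * pw x i

/-- Right polynomial `Σ xⁱ·f(cᵢ)`. -/
noncomputable def rpoly (f : R →+* S) (x : S) (c : ℕ →₀ R) : S :=
  c.sum fun i r => pw x i * f r

/-- Left degree (`⊥` plays the role of `-∞`), computed from a representation as a
left polynomial in `x` (unique when `{1,x,x²,…}` is a left basis). -/
noncomputable def degl (f : R →+* S) (x : S) (p : S) : WithBot ℕ :=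
  if h : ∃ c : ℕ →₀ R, lpoly f x c = p then (Classical.choose h).support.max else ⊥

/-- Left leading coefficient (`0` for the zero polynomial). -/
noncomputable def lcl (f : R →+* S) (x : S) (p : S) : R :=
  if h : ∃ c : ℕ →₀ R, lpoly f x c = p then
    (Classical.choose h) (WithBot.unbotD 0 (Classical.choose h).support.max) else 0

/-- Right degree. -/
noncomputable def degr (f : R →+* S) (x : S) (p : S) : WithBot ℕ :=
  if h : ∃ c : ℕ →₀ R, rpoly f x c = p then (Classical.choose h).support.max else ⊥

/-- Right leading coefficient. -/
noncomputable def lcr (f : R →+* S) (x : S) (p : S) : R :=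
  if h : ∃ c : ℕ →₀ R, rpoly f x c = p then
    (Classical.choose h) (WithBot.unbotD 0 (Classical.choose h).support.max) else 0

/-- `(S,x)` is a left generalized nonassociative Ore extension of `R`
(with the embedding `f : R →+* S`). -/
structure IsLeftGNOE (f : R →+* S) (x : S) : Prop where
  inj : Function.Injective f
  powAssoc : PowAssoc x
  basis : Function.Bijective (lpoly f x)
  closed : ∀ (m n : ℕ) (r s : R), ∃ c : ℕ →₀ R,
    lpoly f x c = (f r * pw x m) * (f s * pw x n) ∧ ∀ i, m + n < i → c i = 0

/-- `(S,x)` is a right generalized nonassociative Ore extension of `R`. -/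
structure IsRightGNOE (f : R →+* S) (x : S) : Prop where
  inj : Function.Injective f
  powAssoc : PowAssoc x
  basis : Function.Bijective (rpoly f x)
  closed : ∀ (m n : ℕ) (r s : R), ∃ c : ℕ →₀ R,
    rpoly f x c = (pw x m * f r) * (pw x n * f s) ∧ ∀ i, m + n < i → c i = 0

/-- Right ideal of a (nonassociative) ring. -/
def IsRightIdeal (T : Type*) [NonAssocRing T] (I : Set T) : Prop :=
  (0 : T) ∈ I ∧ (∀ a b, a ∈ I → b ∈ I → a + b ∈ I) ∧ (∀ a, a ∈ I → -a ∈ I) ∧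
    ∀ a t, a ∈ I → a * t ∈ I

/-- Left ideal of a (nonassociative) ring. -/
def IsLeftIdeal (T : Type*) [NonAssocRing T] (I : Set T) : Prop :=
  (0 : T) ∈ I ∧ (∀ a b, a ∈ I → b ∈ I → a + b ∈ I) ∧ (∀ a, a ∈ I → -a ∈ I) ∧
    ∀ a t, a ∈ I → t * a ∈ I

/-- The right ideal generated by a set. -/
def rIdealGen (T : Type*) [NonAssocRing T] (G : Set T) : Set T :=
  ⋂₀ {I : Set T | IsRightIdeal T I ∧ G ⊆ I}

/-- The left ideal generated by a set. -/
def lIdealGen (T : Type*) [NonAssocRing T] (G : Set T) : Set T :=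
  ⋂₀ {I : Set T | IsLeftIdeal T I ∧ G ⊆ I}

/-- Right Noetherian: every right ideal is finitely generated. -/
def RightNoeth (T : Type*) [NonAssocRing T] : Prop :=
  ∀ I : Set T, IsRightIdeal T I → ∃ G : Finset T, I = rIdealGen T ↑G

/-- Left Noetherian: every left ideal is finitely generated. -/
def LeftNoeth (T : Type*) [NonAssocRing T] : Prop :=
  ∀ I : Set T, IsLeftIdeal T I → ∃ G : Finset T, I = lIdealGen T ↑G

/-- `M` is a right `R`-submodule of `S` (via `f`). -/
def IsRightRSub (f : R →+* S) (M : Set S) : Prop :=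
  (0 : S) ∈ M ∧ (∀ a b, a ∈ M → b ∈ M → a + b ∈ M) ∧ (∀ a, a ∈ M → -a ∈ M) ∧
    ∀ a r, a ∈ M → a * f r ∈ M

/-- `M` is a left `R`-submodule of `S` (via `f`). -/
def IsLeftRSub (f : R →+* S) (M : Set S) : Prop :=
  (0 : S) ∈ M ∧ (∀ a b, a ∈ M → b ∈ M → a + b ∈ M) ∧ (∀ a, a ∈ M → -a ∈ M) ∧
    ∀ a r, a ∈ M → f r * a ∈ M

/-- The right `R`-submodule of `S` generated by a set. -/
def rSubGen (f : R →+* S) (G : Set S) : Set S :=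
  ⋂₀ {M : Set S | IsRightRSub f M ∧ G ⊆ M}

/-- `s` belongs to the right ideal of `S` generated by `p 0, …, p (n-1)` and admits a
left-degree-additive representation `s = Σⱼ (⋯((p_{iⱼ} s_{j1})s_{j2})⋯)s_{jm}` whose degree
bound `max_j (deg_l p_{iⱼ} + Σₖ deg_l s_{jk})` equals `deg_l s`. -/
def LDegAddMem (f : R →+* S) (x : S) {n : ℕ} (p : Fin n → S) (s : S) : Prop :=
  ∃ L : List (Fin n × List S),
    s = (L.map fun t => t.2.foldl (· * ·) (p t.1)).sum ∧
    degl f x s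
      = (L.map fun t => degl f x (p t.1) + (t.2.map (degl f x)).sum).foldr max ⊥

/-- `s` belongs to the left ideal of `S` generated by `p 0, …, p (n-1)` and admits a
right-degree-additive representation. -/
def RDegAddMem (f : R →+* S) (x : S) {n : ℕ} (p : Fin n → S) (s : S) : Prop :=
  ∃ L : List (Fin n × List S),
    s = (L.map fun t => t.2.foldl (fun b a => a * b) (p t.1)).sum ∧
    degr f x s
      = (L.map fun t => degr f x (p t.1) + (t.2.map (degr f x)).sum).foldr max ⊥

/-- The left Euclidean division algorithm for `(S,x)` over `R`. -/
def LeftEDA (f : R →+* S) (x : S) : Prop :=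
  ∀ (n : ℕ) (p : Fin n → S) (q : S), q ≠ 0 →
    (∀ i, degl f x (p i) ≤ degl f x q) →
    lcl f x q ∈ rIdealGen R (Set.range fun i => lcl f x (p i)) →
    ∃ s, LDegAddMem f x p s ∧ degl f x (q - s) < degl f x q

/-- The right Euclidean division algorithm for `(S,x)` over `R`. -/
def RightEDA (f : R →+* S) (x : S) : Prop :=
  ∀ (n : ℕ) (p : Fin n → S) (q : S), q ≠ 0 →
    (∀ i, degr f x (p i) ≤ degr f x q) →
    lcr f x q ∈ lIdealGen R (Set.range fun i => lcr f x (p i)) →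
    ∃ s, RDegAddMem f x p s ∧ degr f x (q - s) < degr f x q

/-- The maps `πᵢᵐ`: the sum of all `C(m,i)` compositions of `i` copies of `σ`
and `m - i` copies of `δ`. -/
def pimap (σ δ : R → R) : ℕ → ℕ → R → R
  | 0, 0 => id
  | _ + 1, 0 => fun _ => 0
  | 0, m + 1 => fun r => δ (pimap σ δ 0 m r)
  | i + 1, m + 1 => fun r => σ (pimap σ δ i m r) + δ (pimap σ δ (i + 1) m r)

/-- `(S,x)` realizes the generalized polynomial ring `R[X;σ,δ]`: `{1,x,x²,…}` is a left
`R`-basis and multiplication is given by `(rxᵐ)(sxⁿ) = Σᵢ (r πᵢᵐ(s)) x^{i+n}`. -/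
def IsGPolyRing (σ δ : R → R) (f : R →+* S) (x : S) : Prop :=
  Function.Injective f ∧ PowAssoc x ∧ Function.Bijective (lpoly f x) ∧
    ∀ (r s : R) (m n : ℕ),
      (f r * pw x m) * (f s * pw x n)
        = ∑ i ∈ Finset.range (m + 1), f (r * pimap σ δ i m s) * pw x (i + n)

/-- `(S,x)` realizes the flipped generalized polynomial ring `R[X;σ,δ]^fl`:
multiplication is given by `(rxᵐ)(sxⁿ) = Σᵢ τₙ(r, πᵢᵐ(s)) x^{i+n}`. -/
def IsFlipGPolyRing (σ δ : R → R) (f : R →+* S) (x : S) : Prop :=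
  Function.Injective f ∧ PowAssoc x ∧ Function.Bijective (lpoly f x) ∧
    ∀ (r s : R) (m n : ℕ),
      (f r * pw x m) * (f s * pw x n)
        = ∑ i ∈ Finset.range (m + 1),
            f (if Even n then r * pimap σ δ i m s else pimap σ δ i m s * r) * pw x (i + n)

end Defs
section AuxProof

variable {R : Type*} {S : Type*} [NonAssocRing R] [NonAssocRing S]

lemma lpoly_single (f : R →+* S) (x : S) (k : ℕ) (r : R) :
    lpoly f x (Finsupp.single k r) = f r * pw x k := by
  rw [lpoly, Finsupp.sum_single_index]
  simp

/-- `lpoly` as an additive monoid hom. -/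
noncomputable def lpolyHom (f : R →+* S) (x : S) : (ℕ →₀ R) →+ S where
  toFun := lpoly f x
  map_zero' := Finsupp.sum_zero_index
  map_add' := fun c c' => by
    show lpoly f x (c + c') = lpoly f x c + lpoly f x c'
    rw [lpoly, lpoly, lpoly]
    exact Finsupp.sum_add_index' (fun i => by simp) (fun i a b => by rw [map_add, add_mul])

lemma lpoly_eq_hom (f : R →+* S) (x : S) (c : ℕ →₀ R) :
    lpoly f x c = lpolyHom f x c := rfl

lemma degl_lpoly (f : R →+* S) (x : S) (hinj : Function.Injective (lpoly f x))
    (c : ℕ →₀ R) : degl f x (lpoly f x c) = c.support.max := by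
  have h : ∃ c', lpoly f x c' = lpoly f x c := ⟨c, rfl⟩
  rw [degl, dif_pos h, hinj (Classical.choose_spec h)]

lemma lcl_lpoly (f : R →+* S) (x : S) (hinj : Function.Injective (lpoly f x))
    (c : ℕ →₀ R) : lcl f x (lpoly f x c) = c (WithBot.unbotD 0 c.support.max) := by
  have h : ∃ c', lpoly f x c' = lpoly f x c := ⟨c, rfl⟩
  rw [lcl, dif_pos h, hinj (Classical.choose_spec h)]

lemma pimap_gt (σ δ : R → R) (hσ0 : σ 0 = 0) (hδ0 : δ 0 = 0) :
    ∀ (m i : ℕ), m < i → ∀ r, pimap σ δ i m r = 0 := by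
  intro m
  induction m with
  | zero =>
    intro i hi r
    match i, hi with
    | i + 1, _ => rfl
  | succ m ih =>
    intro i hi r
    match i, hi with
    | i + 1, hi =>
      show σ (pimap σ δ i m r) + δ (pimap σ δ (i + 1) m r) = 0
      rw [ih i (by omega) r, ih (i + 1) (by omega) r, hσ0, hδ0, add_zero]

lemma pimap_diag (σ δ : R → R) (hσ0 : σ 0 = 0) (hδ0 : δ 0 = 0) :
    ∀ (m : ℕ) (r : R), pimap σ δ m m r = σ^[m] r := by
  intro m
  induction m with
  | zero => intro r; rfl
  | succ m ih =>
    intro r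
    show σ (pimap σ δ m m r) + δ (pimap σ δ (m + 1) m r) = σ^[m + 1] r
    rw [ih, pimap_gt σ δ hσ0 hδ0 m (m + 1) (by omega), hδ0, add_zero,
      Function.iterate_succ_apply']

/-- Coefficients of a left polynomial multiplied by a monomial on the right. -/
noncomputable def expandC (σ δ : R → R) (c : ℕ →₀ R) (r : R) (nn : ℕ) : ℕ →₀ R :=
  c.sum fun j a => ∑ i ∈ Finset.range (j + 1),
    Finsupp.single (i + nn) (if Even nn then a * pimap σ δ i j r else pimap σ δ i j r * a)

lemma mul_monomial (f : R →+* S) (x : S) (σ δ : R → R)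
    (hmul : ∀ (r s : R) (m n : ℕ), (f r * pw x m) * (f s * pw x n)
      = ∑ i ∈ Finset.range (m + 1),
          f (if Even n then r * pimap σ δ i m s else pimap σ δ i m s * r) * pw x (i + n))
    (c : ℕ →₀ R) (r : R) (nn : ℕ) :
    lpoly f x c * (f r * pw x nn) = lpoly f x (expandC σ δ c r nn) := by
  conv_lhs => rw [lpoly, Finsupp.sum_mul]
  conv_rhs => rw [expandC, lpoly_eq_hom, map_finsuppSum]
  refine Finsupp.sum_congr fun j hj => ?_
  rw [hmul, map_sum]
  refine Finset.sum_congr rfl fun i hi => ?_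
  rw [← lpoly_eq_hom, lpoly_single]

lemma expandC_apply_high (σ δ : R → R) (c : ℕ →₀ R) (r : R) (nn m : ℕ)
    (hm : ∀ j ∈ c.support, j ≤ m) (e : ℕ) (he : m + nn < e) :
    expandC σ δ c r nn e = 0 := by
  rw [expandC, Finsupp.sum_apply]
  rw [Finsupp.sum]
  refine Finset.sum_eq_zero fun j hj => ?_
  rw [Finset.sum_apply']
  refine Finset.sum_eq_zero fun i hi => ?_
  refine Finsupp.single_eq_of_ne ?_
  have h1 : i ≤ j := by simpa [Nat.lt_succ_iff] using Finset.mem_range.mp hi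
  have h2 := hm j hj
  omega

lemma expandC_apply_top (σ δ : R → R) (hσ0 : σ 0 = 0) (hδ0 : δ 0 = 0)
    (c : ℕ →₀ R) (r : R) (nn m : ℕ) (hm : ∀ j ∈ c.support, j ≤ m) :
    expandC σ δ c r nn (m + nn)
      = if Even nn then c m * σ^[m] r else σ^[m] r * c m := by
  rw [expandC, Finsupp.sum_apply, Finsupp.sum]
  by_cases hmem : m ∈ c.support
  · rw [Finset.sum_eq_single m]
    · rw [Finset.sum_apply', Finset.sum_eq_single m]
      · rw [Finsupp.single_eq_same, pimap_diag σ δ hσ0 hδ0]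
      · intro i hi hne
        exact Finsupp.single_eq_of_ne (by omega)
      · intro h
        exact absurd (Finset.self_mem_range_succ m) h
    · intro j hj hne
      rw [Finset.sum_apply']
      refine Finset.sum_eq_zero fun i hi => ?_
      have h1 : i ≤ j := by simpa [Nat.lt_succ_iff] using Finset.mem_range.mp hi
      have h2 : j < m := lt_of_le_of_ne (hm j hj) hne
      exact Finsupp.single_eq_of_ne (by omega)
    · intro h; exact absurd hmem h
  · have hc : c m = 0 := Finsupp.notMem_support_iff.mp hmem
    rw [hc]
    have hz : (if Even nn then (0:R) * σ^[m] r else σ^[m] r * 0) = 0 := by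
      split <;> simp
    rw [hz]
    refine Finset.sum_eq_zero fun j hj => ?_
    rw [Finset.sum_apply']
    refine Finset.sum_eq_zero fun i hi => ?_
    have h1 : i ≤ j := by simpa [Nat.lt_succ_iff] using Finset.mem_range.mp hi
    have h2 : j < m := lt_of_le_of_ne (hm j hj) (fun h => hmem (h ▸ hj))
    exact Finsupp.single_eq_of_ne (by omega)

lemma list_sum_mul (l : List S) (b : S) : (l.map (· * b)).sum = l.sum * b := by
  induction l with
  | nil => simp
  | cons a l ih => simp [ih, add_mul]

lemma foldr_max_const (v : WithBot ℕ) :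
    ∀ l : List (WithBot ℕ), l ≠ [] → (∀ a ∈ l, a = v) → l.foldr max ⊥ = v := by
  intro l
  induction l with
  | nil => intro h; exact absurd rfl h
  | cons a l ih =>
    intro _ hv
    rcases List.eq_nil_or_concat l with h | _
    · subst h
      simp [hv a (by simp)]
    · have hl : l ≠ [] := by
        rintro rfl
        simp_all
      rw [List.foldr_cons, ih hl (fun b hb => hv b (by simp [hb])),
        hv a (by simp), max_self]

end AuxProof

/-- `R[X;σ,δ]^fl` with `σ` an additive surjection satisfies the
left Euclidean division algorithm. -/
theorem stmt12 {R S : Type*} [NonAssocRing R] [NonAssocRing S] (f : R →+* S) (x : S) (σ δ : R → R)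
    (hσadd : ∀ a b : R, σ (a + b) = σ a + σ b) (hδadd : ∀ a b : R, δ (a + b) = δ a + δ b)
    (hσ1 : σ 1 = 1) (hδ1 : δ 1 = 0)
    (hσsurj : Function.Surjective σ)
    (hpoly : IsFlipGPolyRing σ δ f x) :
    LeftEDA f x := by
  obtain ⟨hinjf, hpa, hbij, hmul⟩ := hpoly
  have hinj : Function.Injective (lpoly f x) := hbij.1
  have hσ0 : σ 0 = 0 := by
    have h : σ 0 + σ 0 = σ 0 + 0 := by rw [add_zero, ← hσadd, add_zero]
    exact add_left_cancel h
  have hδ0 : δ 0 = 0 := by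
    have h : δ 0 + δ 0 = δ 0 + 0 := by rw [add_zero, ← hδadd, add_zero]
    exact add_left_cancel h
  have hit1 : ∀ m : ℕ, σ^[m] (1 : R) = 1 := by
    intro m
    induction m with
    | zero => rfl
    | succ m ih => rw [Function.iterate_succ_apply', ih, hσ1]
  have hit0 : ∀ m : ℕ, σ^[m] (0 : R) = 0 := by
    intro m
    induction m with
    | zero => rfl
    | succ m ih => rw [Function.iterate_succ_apply', ih, hσ0]
  intro n p q hq hdeg hlc
  obtain ⟨cq, hcq⟩ := hbij.2 q
  have hcqne : cq ≠ 0 := by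
    rintro rfl
    exact hq (by rw [← hcq, lpoly_eq_hom, map_zero])
  obtain ⟨d, hd⟩ := Finset.max_of_nonempty (Finsupp.support_nonempty_iff.mpr hcqne)
  have hdq : degl f x q = (d : WithBot ℕ) := by
    rw [← hcq, degl_lpoly f x hinj, hd, Nat.cast_withBot]
  have hlcq : lcl f x q = cq d := by rw [← hcq, lcl_lpoly f x hinj, hd]; rfl
  have hcqd : cq d ≠ 0 := Finsupp.mem_support_iff.mp (Finset.mem_of_max hd)
  have hcq_high : ∀ j : ℕ, d < j → cq j = 0 := by
    intro j hj
    by_contra h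
    have := Finset.le_max (Finsupp.mem_support_iff.mpr h)
    rw [hd] at this
    exact absurd (WithBot.coe_le_coe.mp this) (by omega)
  have h10 : (1 : R) ≠ 0 := by
    intro h
    exact hcqd (by calc cq d = cq d * 1 := (mul_one _).symm
      _ = 0 := by rw [h, mul_zero])
  have hdegmono : ∀ (k : ℕ) (r : R), r ≠ 0 → degl f x (f r * pw x k) = (k : WithBot ℕ) := by
    intro k r hr
    rw [← lpoly_single, degl_lpoly f x hinj, Finsupp.support_single_ne_zero _ hr,
      Finset.max_singleton, Nat.cast_withBot]
  -- the set of leading coefficients realizable in degree `d`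
  set T : Set R := {a : R | ∃ (c : ℕ →₀ R) (L : List (Fin n × List S)),
    lpoly f x c = (L.map fun t => t.2.foldl (· * ·) (p t.1)).sum ∧
    (∀ t ∈ L, degl f x (p t.1) + (t.2.map (degl f x)).sum = (d : WithBot ℕ)) ∧
    (∀ j : ℕ, d < j → c j = 0) ∧ c d = a} with hT
  have hzeroT : (0 : R) ∈ T := by
    refine ⟨0, [], ?_, ?_, ?_, ?_⟩
    · rw [lpoly_eq_hom, map_zero]; simp
    · simp
    · simp
    · simp
  -- closure under right multiplication of a term list by a degree-0 monomial
  have happend : ∀ (L : List (Fin n × List S)) (w : S), degl f x w = (0 : WithBot ℕ) →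
      (∀ t ∈ L, degl f x (p t.1) + (t.2.map (degl f x)).sum = (d : WithBot ℕ)) →
      (((L.map fun t => (t.1, t.2 ++ [w])).map fun t => t.2.foldl (· * ·) (p t.1)).sum
          = (L.map fun t => t.2.foldl (· * ·) (p t.1)).sum * w)
        ∧ ∀ t ∈ (L.map fun t => (t.1, t.2 ++ [w])),
            degl f x (p t.1) + (t.2.map (degl f x)).sum = (d : WithBot ℕ) := by
    intro L w hw hL
    constructor
    · rw [List.map_map, ← list_sum_mul, List.map_map]
      congr 1
      refine List.map_congr_left fun t ht => ?_
      show (t.2 ++ [w]).foldl (· * ·) (p t.1) = (t.2.foldl (· * ·) (p t.1)) * w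
      rw [List.foldl_append]
      rfl
    · intro t ht
      rw [List.mem_map] at ht
      obtain ⟨u, hu, rfl⟩ := ht
      show degl f x (p u.1) + ((u.2 ++ [w]).map (degl f x)).sum = (d : WithBot ℕ)
      rw [List.map_append, List.sum_append]
      simp only [List.map_cons, List.map_nil, List.sum_cons, List.sum_nil, hw, add_zero,
        zero_add]
      exact hL u hu
  have hTideal : IsRightIdeal R T := by
    refine ⟨hzeroT, ?_, ?_, ?_⟩
    · rintro a b ⟨ca, La, hca, hLa, hha, hda⟩ ⟨cb, Lb, hcb, hLb, hhb, hdb⟩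
      refine ⟨ca + cb, La ++ Lb, ?_, ?_, ?_, ?_⟩
      · rw [lpoly_eq_hom, map_add, ← lpoly_eq_hom, ← lpoly_eq_hom, hca, hcb,
          List.map_append, List.sum_append]
      · intro t ht
        rcases List.mem_append.mp ht with h | h
        · exact hLa t h
        · exact hLb t h
      · intro j hj
        rw [Finsupp.add_apply, hha j hj, hhb j hj, add_zero]
      · rw [Finsupp.add_apply, hda, hdb]
    · rintro a ⟨ca, La, hca, hLa, hha, hda⟩
      have hw : degl f x (f (-1 : R)) = (0 : WithBot ℕ) := by
        have := hdegmono 0 (-1 : R) (neg_ne_zero.mpr h10)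
        rwa [show pw x 0 = 1 from rfl, mul_one] at this
      obtain ⟨hsum, hdegs⟩ := happend La (f (-1 : R)) hw hLa
      refine ⟨-ca, La.map fun t => (t.1, t.2 ++ [f (-1 : R)]), ?_, hdegs, ?_, ?_⟩
      · rw [hsum, ← hca, lpoly_eq_hom, map_neg, ← lpoly_eq_hom, map_neg f 1, map_one,
          mul_neg_one]
      · intro j hj
        rw [Finsupp.neg_apply, hha j hj, neg_zero]
      · rw [Finsupp.neg_apply, hda]
    · rintro a t ⟨ca, La, hca, hLa, hha, hda⟩
      by_cases ht0 : t = 0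
      · rw [ht0, mul_zero]; exact hzeroT
      · obtain ⟨u, hu⟩ := Function.Surjective.iterate hσsurj d t
        have hu0 : u ≠ 0 := by
          rintro rfl
          rw [hit0] at hu
          exact ht0 hu.symm
        have hw : degl f x (f u) = (0 : WithBot ℕ) := by
          have := hdegmono 0 u hu0
          rwa [show pw x 0 = 1 from rfl, mul_one] at this
        obtain ⟨hsum, hdegs⟩ := happend La (f u) hw hLa
        have hsupp : ∀ j ∈ ca.support, j ≤ d := by
          intro j hj
          by_contra h
          exact Finsupp.mem_support_iff.mp hj (hha j (by omega))
        refine ⟨expandC σ δ ca u 0, La.map fun t' => (t'.1, t'.2 ++ [f u]), ?_, hdegs, ?_, ?_⟩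
        · have := mul_monomial f x σ δ hmul ca u 0
          rw [show pw x 0 = 1 from rfl, mul_one] at this
          rw [← this, hca, hsum]
        · intro j hj
          exact expandC_apply_high σ δ ca u 0 d hsupp j (by omega)
        · have := expandC_apply_top σ δ hσ0 hδ0 ca u 0 d hsupp
          rw [add_zero] at this
          rw [this, if_pos Even.zero, hda, hu]
  have hTgen : (Set.range fun i => lcl f x (p i)) ⊆ T := by
    rintro g ⟨i, rfl⟩
    show lcl f x (p i) ∈ T
    by_cases hpi : p i = 0
    · rw [hpi, show (0 : S) = lpoly f x 0 from (by rw [lpoly_eq_hom, map_zero]),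
        lcl_lpoly f x hinj]
      simpa using hzeroT
    · obtain ⟨cp, hcp⟩ := hbij.2 (p i)
      have hcpne : cp ≠ 0 := by
        rintro rfl
        exact hpi (by rw [← hcp, lpoly_eq_hom, map_zero])
      obtain ⟨m, hm⟩ := Finset.max_of_nonempty (Finsupp.support_nonempty_iff.mpr hcpne)
      have hdpi : degl f x (p i) = (m : WithBot ℕ) := by
        rw [← hcp, degl_lpoly f x hinj, hm, Nat.cast_withBot]
      have hmd : m ≤ d := by
        have := hdeg i
        rw [hdpi, hdq] at this
        exact WithBot.coe_le_coe.mp this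
      have hlcpi : lcl f x (p i) = cp m := by rw [← hcp, lcl_lpoly f x hinj, hm]; rfl
      have hsupp : ∀ j ∈ cp.support, j ≤ m := by
        intro j hj
        have := Finset.le_max hj
        rw [hm] at this
        exact WithBot.coe_le_coe.mp this
      refine ⟨expandC σ δ cp 1 (d - m), [(i, [f (1 : R) * pw x (d - m)])], ?_, ?_, ?_, ?_⟩
      · have := mul_monomial f x σ δ hmul cp 1 (d - m)
        rw [← this, hcp]
        simp
      · intro t ht
        rw [List.mem_singleton] at ht
        subst ht
        show degl f x (p i) + ([f (1 : R) * pw x (d - m)].map (degl f x)).sum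
            = (d : WithBot ℕ)
        rw [hdpi]
        simp only [List.map_cons, List.map_nil, List.sum_cons, List.sum_nil, add_zero]
        rw [hdegmono (d - m) 1 h10, ← Nat.cast_add]
        exact congrArg _ (by omega)
      · intro j hj
        exact expandC_apply_high σ δ cp 1 (d - m) m hsupp j (by omega)
      · show (expandC σ δ cp 1 (d - m)) d = lcl f x (p i)
        have := expandC_apply_top σ δ hσ0 hδ0 cp 1 (d - m) m hsupp
        rw [show m + (d - m) = d by omega] at this
        rw [this, hit1, hlcpi]
        split <;> [exact mul_one _; exact one_mul _]
  -- apply the right-ideal membership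
  have hkey : lcl f x q ∈ T := Set.mem_sInter.mp hlc T ⟨hTideal, hTgen⟩
  obtain ⟨c, L, hc, hL, hhigh, hcd⟩ := hkey
  have hcd' : c d ≠ 0 := by rw [hcd, hlcq]; exact hcqd
  have hLne : L ≠ [] := by
    rintro rfl
    simp only [List.map_nil, List.sum_nil] at hc
    have : c = 0 := hinj (by rw [hc, lpoly_eq_hom, map_zero])
    exact hcd' (by rw [this]; rfl)
  have hdegs : degl f x ((L.map fun t => t.2.foldl (· * ·) (p t.1)).sum) = (d : WithBot ℕ) := by
    rw [← hc, degl_lpoly f x hinj]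
    have hle : c.support.max ≤ (d : WithBot ℕ) := by
      refine Finset.max_le fun j hj => ?_
      have hjd : j ≤ d := by
        by_contra h
        exact Finsupp.mem_support_iff.mp hj (hhigh j (by omega))
      rw [Nat.cast_withBot]
      exact WithBot.coe_le_coe.mpr hjd
    have hge : (d : WithBot ℕ) ≤ c.support.max := by
      rw [Nat.cast_withBot]
      exact Finset.le_max (Finsupp.mem_support_iff.mpr hcd')
    exact le_antisymm hle hge
  refine ⟨(L.map fun t => t.2.foldl (· * ·) (p t.1)).sum, ⟨L, rfl, ?_⟩, ?_⟩
  · rw [hdegs]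
    refine (foldr_max_const (d : WithBot ℕ) _ ?_ ?_).symm
    · intro h
      exact hLne (List.map_eq_nil_iff.mp h)
    · intro a ha
      rw [List.mem_map] at ha
      obtain ⟨t, ht, rfl⟩ := ha
      exact hL t ht
  · have hqs : q - (L.map fun t => t.2.foldl (· * ·) (p t.1)).sum = lpoly f x (cq - c) := by
      rw [lpoly_eq_hom, map_sub, ← lpoly_eq_hom, ← lpoly_eq_hom, hcq, hc]
    rw [hqs, hdq, degl_lpoly f x hinj]
    rcases Finset.eq_empty_or_nonempty (cq - c).support with h | h
    · rw [h, Finset.max_empty]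
      exact WithBot.bot_lt_coe d
    · obtain ⟨j, hj⟩ := Finset.max_of_nonempty h
      rw [hj]
      have hjmem : j ∈ (cq - c).support := Finset.mem_of_max hj
      have hjne : cq j - c j ≠ 0 := by
        have := Finsupp.mem_support_iff.mp hjmem
        rwa [Finsupp.sub_apply] at this
      have hjlt : j < d := by
        rcases lt_trichotomy j d with h' | h' | h'
        · exact h'
        · exfalso; apply hjne; rw [h', hcd, hlcq, sub_self]
        · exfalso; apply hjne; rw [hcq_high j h', hhigh j h', sub_self]
      rw [Nat.cast_withBot]
      exact WithBot.coe_lt_coe.mpr hjlt
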